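/- Let g : ℝᵖ → ℝ be locally Lipschitz and suppose g is subdifferentially regular on an open set O ⊆ ℝᵖ, and let γ : [0,1] → ℝᵖ be an absolutely continuous curve with γ([0,1]) ⊆ O. Then g satisfies the chain rule along γ: for almost every t ∈ [0,1], the composition g ∘ γ is differentiable at t and (g ∘ γ)'(t) = ⟨v, γ'(t)⟩ for every v ∈ ∂°g(γ(t)), where ∂° is the Clarke subdifferential. -/

import Mathlib

/-!
Being Lipschitz on the compact image of the curve, `g` turns the bounded variation of `γ`
(its increments are controlled by `∫ ‖γ'‖`) into bounded variation of `g ∘ γ`, so `g ∘ γ` is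
differentiable almost everywhere. At a time `t` where both `γ` and `g ∘ γ` are differentiable,
the Lipschitz bound absorbs the `o(s)` gap between `γ (t + s)` and `γ t + s • γ' t`, so `g` has
the two-sided derivative `D = (g ∘ γ)'(t)` along the tangent line. A Clarke subgradient `v`
satisfies `⟪v, d⟫ ≤ g°(x; d)`, and regularity replaces `g°` by the lower Dini derivative, which
is `D` in direction `γ' t` and `-D` in direction `-γ' t`; hence `⟪v, γ' t⟫ = D`.
-/

open Filter Set MeasureTheory

variable {p : ℕ}

/-- Absolute continuity of a curve on `[0,1]`. -/
def AbsCont {E : Type*} [NormedAddCommGroup E] [NormedSpace ℝ E] (γ : ℝ → E) : Prop :=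
  (∀ᵐ t ∂(volume.restrict (Icc (0:ℝ) 1)), DifferentiableAt ℝ γ t) ∧
  IntegrableOn (deriv γ) (Icc (0:ℝ) 1) volume ∧
  ∀ t ∈ Icc (0:ℝ) 1, γ t - γ 0 = ∫ s in (0:ℝ)..t, deriv γ s

/-- Clarke generalized directional derivative
`g°(x;d) = limsup_{y → x, t ↓ 0} (g(y + t d) - g(y))/t`. -/
noncomputable def clarkeDir (g : EuclideanSpace ℝ (Fin p) → ℝ)
    (x d : EuclideanSpace ℝ (Fin p)) : ℝ :=
  Filter.limsup (fun q : EuclideanSpace ℝ (Fin p) × ℝ => (g (q.1 + q.2 • d) - g q.1) / q.2)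
    ((nhds x) ×ˢ (nhdsWithin 0 (Ioi 0)))

/-- Lower Dini directional derivative. -/
noncomputable def diniLower (g : EuclideanSpace ℝ (Fin p) → ℝ)
    (x d : EuclideanSpace ℝ (Fin p)) : ℝ :=
  Filter.liminf (fun t : ℝ => (g (x + t • d) - g x) / t) (nhdsWithin 0 (Ioi 0))

/-- Clarke subdifferential: convex hull of limits of gradients at nearby points. -/
def clarke (g : EuclideanSpace ℝ (Fin p) → ℝ) (z : EuclideanSpace ℝ (Fin p)) :
    Set (EuclideanSpace ℝ (Fin p)) :=
  convexHull ℝ {v | ∃ zk gk : ℕ → EuclideanSpace ℝ (Fin p),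
    (∀ k, HasGradientAt g (gk k) (zk k)) ∧
    Tendsto zk atTop (nhds z) ∧ Tendsto gk atTop (nhds v)}

theorem boundedVariationOn_Icc_of_dist_le_sub {E : Type*} [PseudoMetricSpace E] {f : ℝ → E}
    {m : ℝ → ℝ} {a b : ℝ}
    (h : ∀ x ∈ Icc a b, ∀ y ∈ Icc a b, x ≤ y → dist (f x) (f y) ≤ m y - m x) :
    BoundedVariationOn f (Icc a b) := by
  refine ne_top_of_le_ne_top (ENNReal.ofReal_ne_top (r := m b - m a))
    (iSup_le fun ⟨n, u, hu, hus⟩ => ?_)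
  have hstep : ∀ i, edist (f (u (i + 1))) (f (u i)) ≤ ENNReal.ofReal (m (u (i + 1)) - m (u i)) :=
    fun i => by
      rw [edist_comm, edist_dist]
      exact ENNReal.ofReal_le_ofReal (h _ (hus i) _ (hus (i + 1)) (hu i.le_succ))
  have hmono : ∀ i, 0 ≤ m (u (i + 1)) - m (u i) :=
    fun i => dist_nonneg.trans (h _ (hus i) _ (hus (i + 1)) (hu i.le_succ))
  calc ∑ i ∈ Finset.range n, edist (f (u (i + 1))) (f (u i))
      ≤ ∑ i ∈ Finset.range n, ENNReal.ofReal (m (u (i + 1)) - m (u i)) :=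
        Finset.sum_le_sum fun i _ => hstep i
    _ = ENNReal.ofReal (m (u n) - m (u 0)) := by
        rw [← ENNReal.ofReal_sum_of_nonneg fun i _ => hmono i,
          Finset.sum_range_sub (fun i => m (u i))]
    _ ≤ ENNReal.ofReal (m b - m a) := by
        have hab : a ≤ b := (hus 0).1.trans (hus 0).2
        have h1 := dist_nonneg.trans (h _ (hus n) b ⟨hab, le_rfl⟩ (hus n).2)
        have h2 := dist_nonneg.trans (h a ⟨le_rfl, hab⟩ _ (hus 0) (hus 0).1)
        exact ENNReal.ofReal_le_ofReal (by linarith)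

namespace AbsCont

variable {E : Type*} [NormedAddCommGroup E] [NormedSpace ℝ E] {γ : ℝ → E}

theorem intervalIntegrable_deriv (hγ : AbsCont γ) {a b : ℝ} (ha : a ∈ Icc (0:ℝ) 1)
    (hb : b ∈ Icc (0:ℝ) 1) : IntervalIntegrable (deriv γ) volume a b :=
  (hγ.2.1.mono_set (uIcc_subset_Icc ha hb)).intervalIntegrable

theorem sub_eq_integral (hγ : AbsCont γ) {a b : ℝ} (ha : a ∈ Icc (0:ℝ) 1)
    (hb : b ∈ Icc (0:ℝ) 1) : γ b - γ a = ∫ s in a..b, deriv γ s := by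
  have h0 : (0:ℝ) ∈ Icc (0:ℝ) 1 := left_mem_Icc.2 zero_le_one
  rw [← intervalIntegral.integral_interval_sub_left (hγ.intervalIntegrable_deriv h0 hb)
    (hγ.intervalIntegrable_deriv h0 ha), ← hγ.2.2 b hb, ← hγ.2.2 a ha]
  abel

theorem continuousOn (hγ : AbsCont γ) : ContinuousOn γ (Icc 0 1) := by
  have hprim := intervalIntegral.continuousOn_primitive_interval (a := (0:ℝ)) (b := 1)
    (μ := volume) (uIcc_of_le (zero_le_one' ℝ) ▸ hγ.2.1)
  rw [uIcc_of_le (zero_le_one' ℝ)] at hprim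
  refine ((continuousOn_const (c := γ 0)).add hprim).congr fun t ht => ?_
  rw [Pi.add_apply, ← hγ.2.2 t ht, add_sub_cancel]

theorem boundedVariationOn (hγ : AbsCont γ) : BoundedVariationOn γ (Icc 0 1) := by
  refine boundedVariationOn_Icc_of_dist_le_sub (m := fun t => ∫ s in (0:ℝ)..t, ‖deriv γ s‖)
    fun a ha b hb hab => ?_
  have h0 : (0:ℝ) ∈ Icc (0:ℝ) 1 := left_mem_Icc.2 zero_le_one
  rw [intervalIntegral.integral_interval_sub_left (hγ.intervalIntegrable_deriv h0 hb).norm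
    (hγ.intervalIntegrable_deriv h0 ha).norm, dist_comm, dist_eq_norm, hγ.sub_eq_integral ha hb]
  exact intervalIntegral.norm_integral_le_integral_norm hab

theorem ae_differentiableAt_comp (hγ : AbsCont γ) {g : E → ℝ} (hg : LocallyLipschitz g) :
    ∀ᵐ t, t ∈ Icc (0:ℝ) 1 → DifferentiableAt ℝ (fun s => g (γ s)) t := by
  obtain ⟨K, hK⟩ := (hg.locallyLipschitzOn (s := γ '' Icc 0 1)).exists_lipschitzOnWith_of_compact
    (isCompact_Icc.image_of_continuousOn hγ.continuousOn)
  have hbv := hK.comp_boundedVariationOn (mapsTo_image γ _) hγ.boundedVariationOn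
  rw [← uIcc_of_le (zero_le_one' ℝ)] at hbv ⊢
  exact hbv.ae_differentiableAt_of_mem_uIcc

end AbsCont

section DirectionalDerivatives

variable {E : Type*} [NormedAddCommGroup E] [NormedSpace ℝ E]

theorem HasDerivAt.tendsto_div_along_line {g : E → ℝ} {x d : E} {D : ℝ}
    (h : HasDerivAt (fun s : ℝ => g (x + s • d)) D 0) :
    Tendsto (fun s : ℝ => (g (x + s • d) - g x) / s) (nhdsWithin 0 (Ioi 0)) (nhds D) := by
  simpa [div_eq_inv_mul] using h.tendsto_slope_zero_right

theorem HasGradientAt.hasDerivAt_along_line {F : Type*} [NormedAddCommGroup F]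
    [InnerProductSpace ℝ F] [CompleteSpace F] {g : F → ℝ} {G z : F} (h : HasGradientAt g G z)
    (d : F) : HasDerivAt (fun s : ℝ => g (z + s • d)) (inner ℝ G d) 0 := by
  have hline : HasDerivAt (fun s : ℝ => z + s • d) d 0 := by
    simpa using ((hasDerivAt_id (0:ℝ)).smul_const d).const_add z
  exact (hasGradientAt_iff_hasFDerivAt.1 h).comp_hasDerivAt_of_eq 0 hline (by simp)

theorem LipschitzOnWith.hasDerivAt_along_tangent {g : E → ℝ} {γ : ℝ → E} {t D : ℝ} {d : E}
    {K : NNReal} {U : Set E} (hL : LipschitzOnWith K g U) (hU : U ∈ nhds (γ t))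
    (hγ : HasDerivAt γ d t) (hD : HasDerivAt (fun s => g (γ s)) D t) :
    HasDerivAt (fun s : ℝ => g (γ t + s • d)) D 0 := by
  have hcurve : ∀ᶠ s in nhds (0:ℝ), γ (t + s) ∈ U :=
    (hγ.continuousAt.tendsto.comp
      ((continuous_const_add t).tendsto' 0 t (add_zero t))).eventually_mem hU
  have htangent : ∀ᶠ s in nhds (0:ℝ), γ t + s • d ∈ U :=
    ((by fun_prop : Continuous fun s : ℝ => γ t + s • d).tendsto' 0 (γ t)
      (by simp)).eventually_mem hU
  have hgap : (fun s : ℝ => g (γ t + s • d) - g (γ (t + s))) =O[nhds 0]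
      fun s => γ (t + s) - γ t - s • d := by
    refine Asymptotics.IsBigO.of_bound K ?_
    filter_upwards [hcurve, htangent] with s hs1 hs2
    rw [← norm_neg, neg_sub, sub_sub]
    exact hL.norm_sub_le hs1 hs2
  rw [hasDerivAt_iff_isLittleO_nhds_zero] at hγ hD ⊢
  refine ((hgap.trans_isLittleO hγ).add hD).congr_left fun s => ?_
  simp only [zero_add, zero_smul, add_zero, smul_eq_mul]
  ring

theorem LipschitzOnWith.eventually_div_le {g : E → ℝ} {K : NNReal} {U : Set E} {x : E}
    (hL : LipschitzOnWith K g U) (hU : U ∈ nhds x) (d : E) :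
    ∀ᶠ q in nhds x ×ˢ nhdsWithin (0:ℝ) (Ioi 0), (g (q.1 + q.2 • d) - g q.1) / q.2 ≤ K * ‖d‖ := by
  have hshift : Tendsto (fun q : E × ℝ => q.1 + q.2 • d) (nhds x ×ˢ nhdsWithin 0 (Ioi 0))
      (nhds x) :=
    ((by fun_prop : Continuous fun q : E × ℝ => q.1 + q.2 • d).tendsto' (x, 0) x
      (by simp)).mono_left
      (nhds_prod_eq (x := x) (y := (0:ℝ)) ▸ prod_mono le_rfl nhdsWithin_le_nhds)
  filter_upwards [tendsto_fst.eventually_mem hU, hshift.eventually_mem hU,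
    tendsto_snd.eventually self_mem_nhdsWithin] with q hq hqd (hpos : 0 < q.2)
  rw [div_le_iff₀ hpos]
  calc g (q.1 + q.2 • d) - g q.1 ≤ ‖g (q.1 + q.2 • d) - g q.1‖ := le_abs_self _
    _ ≤ K * ‖q.1 + q.2 • d - q.1‖ := hL.norm_sub_le hqd hq
    _ = K * ‖d‖ * q.2 := by
        rw [add_sub_cancel_left, norm_smul, Real.norm_of_nonneg hpos.le]; ring

theorem inner_le_of_eventually_div_le {F : Type*} [NormedAddCommGroup F] [InnerProductSpace ℝ F]
    [CompleteSpace F] {g : F → ℝ} {x d w : F} {b : ℝ} {zk gk : ℕ → F}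
    (hgrad : ∀ k, HasGradientAt g (gk k) (zk k)) (hz : Tendsto zk atTop (nhds x))
    (hG : Tendsto gk atTop (nhds w))
    (hb : ∀ᶠ q in nhds x ×ˢ nhdsWithin (0:ℝ) (Ioi 0), (g (q.1 + q.2 • d) - g q.1) / q.2 ≤ b) :
    inner ℝ w d ≤ b := by
  obtain ⟨U, hU, V, hV, hUV⟩ := Filter.mem_prod_iff.1 hb
  refine le_of_tendsto (hG.inner tendsto_const_nhds) ?_
  filter_upwards [hz.eventually_mem hU] with k hk
  refine le_of_tendsto ((hgrad k).hasDerivAt_along_line d).tendsto_div_along_line ?_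
  filter_upwards [hV] with s hs using hUV (mk_mem_prod hk hs)

end DirectionalDerivatives

section Clarke

local notation "E" => EuclideanSpace ℝ (Fin p)

theorem diniLower_eq_of_hasDerivAt {g : E → ℝ} {x d : E} {D : ℝ}
    (h : HasDerivAt (fun s : ℝ => g (x + s • d)) D 0) : diniLower g x d = D :=
  h.tendsto_div_along_line.liminf_eq

theorem inner_le_clarkeDir_of_mem_clarke {g : E → ℝ} (hg : LocallyLipschitz g) {x d v : E}
    (hv : v ∈ clarke g x) : inner ℝ v d ≤ clarkeDir g x d := by
  obtain ⟨K, U, hU, hL⟩ := hg x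
  refine convexHull_min ?_ (convex_halfSpace_le (f := fun w : E => inner ℝ w d)
    ⟨fun a b => inner_add_left a b d, fun c a => real_inner_smul_left a d c⟩ _) hv
  rintro w ⟨zk, gk, hgrad, hz, hG⟩
  rw [mem_ofPred_eq, clarkeDir, limsup_eq]
  exact le_csInf ⟨_, hL.eventually_div_le hU d⟩
    fun b hb => inner_le_of_eventually_div_le hgrad hz hG hb

theorem inner_eq_of_mem_clarke {g : E → ℝ} (hg : LocallyLipschitz g) {x d v : E} {D : ℝ}
    (hreg : ∀ d, clarkeDir g x d = diniLower g x d)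
    (h : HasDerivAt (fun s : ℝ => g (x + s • d)) D 0) (hv : v ∈ clarke g x) :
    inner ℝ v d = D := by
  have hneg : HasDerivAt (fun s : ℝ => g (x + s • -d)) (-D) 0 := by
    simpa [Function.comp_def] using h.comp_of_eq (0:ℝ) (hasDerivAt_neg' 0) neg_zero.symm
  have hle := inner_le_clarkeDir_of_mem_clarke hg (d := d) hv
  have hge := inner_le_clarkeDir_of_mem_clarke hg (d := -d) hv
  rw [hreg, diniLower_eq_of_hasDerivAt h] at hle
  rw [hreg, diniLower_eq_of_hasDerivAt hneg, inner_neg_right] at hge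
  linarith

end Clarke

theorem stmt17_general (p : ℕ) (g : EuclideanSpace ℝ (Fin p) → ℝ) (hg : LocallyLipschitz g)
    (O : Set (EuclideanSpace ℝ (Fin p)))
    (hreg : ∀ x ∈ O, ∀ d : EuclideanSpace ℝ (Fin p), clarkeDir g x d = diniLower g x d)
    (γ : ℝ → EuclideanSpace ℝ (Fin p)) (hγ : AbsCont γ)
    (hγO : ∀ t ∈ Icc (0:ℝ) 1, γ t ∈ O) :
    ∀ᵐ t ∂(volume.restrict (Icc (0:ℝ) 1)), ∀ v ∈ clarke g (γ t),
      HasDerivAt (fun s => g (γ s)) (inner ℝ v (deriv γ t) : ℝ) t := by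
  filter_upwards [hγ.1, ae_restrict_of_ae (hγ.ae_differentiableAt_comp hg),
    ae_restrict_mem measurableSet_Icc] with t hγt hgγt ht v hv
  have hcomp := (hgγt ht).hasDerivAt
  obtain ⟨K, U, hU, hL⟩ := hg (γ t)
  rwa [inner_eq_of_mem_clarke hg (hreg _ (hγO t ht))
    (hL.hasDerivAt_along_tangent hU hγt.hasDerivAt hcomp) hv]

theorem stmt17 (p : ℕ) (g : EuclideanSpace ℝ (Fin p) → ℝ) (hg : LocallyLipschitz g)
    (O : Set (EuclideanSpace ℝ (Fin p))) (hO : IsOpen O)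
    (hreg : ∀ x ∈ O, ∀ d : EuclideanSpace ℝ (Fin p), clarkeDir g x d = diniLower g x d)
    (γ : ℝ → EuclideanSpace ℝ (Fin p)) (hγ : AbsCont γ)
    (hγO : ∀ t ∈ Icc (0:ℝ) 1, γ t ∈ O) :
    ∀ᵐ t ∂(volume.restrict (Icc (0:ℝ) 1)), ∀ v ∈ clarke g (γ t),
      HasDerivAt (fun s => g (γ s)) (inner ℝ v (deriv γ t) : ℝ) t :=
  stmt17_general p g hg O hreg γ hγ hγO
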